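/- arXiv:1811.05620 — 5 statements merged into one kernel-verified Lean document; each statement's English description precedes it below -/
import Mathlib

section
/- Let K be an algebraically closed field of characteristic 3 and let G be a finite subgroup of SL(3,K) of order 3^r (r ≥ 1) containing no pseudo-reflections. Then G is isomorphic to the elementary abelian group (Z/3Z)^r. -/
/-!
Elements of a `p`-group in characteristic `p` are unipotent, so without pseudo-reflections every
nontrivial `g ∈ G` has a one-dimensional fixed line. Pick a nontrivial central `z` and put
`N = z - 1`. Every `g - 1` is nilpotent and commutes with `N`, so it kills the line `ker N` and
maps `ker N²` into `ker N`; hence `g ↦ (g - 1)|_{ker N²}` is a homomorphism from `G` to the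
additive group `Hom(ker N², K³)`. Its kernel fixes `ker N²` pointwise, and `dim ker N² ≥ 2`, so
the no-pseudo-reflection hypothesis makes it injective. Thus `G` embeds into a vector space over
a field of characteristic `p`, i.e. it is elementary abelian.
-/

open Module LinearMap

lemma isNilpotent_sub_one_of_pow_char_pow_eq_one {R : Type*} [Ring R] {p : ℕ} [Fact p.Prime]
    [CharP R p] {x : R} {n : ℕ} (h : x ^ p ^ n = 1) : IsNilpotent (x - 1) :=
  ⟨p ^ n, by rw [sub_pow_char_pow_of_commute p n (Commute.one_right x), h, one_pow, sub_self]⟩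

theorem nonempty_mulEquiv_multiplicative_zmod_pi {G : Type*} [Group G] {p r : ℕ} [Fact p.Prime]
    (hcomm : ∀ a b : G, a * b = b * a) (hpow : ∀ g : G, g ^ p = 1) (hcard : Nat.card G = p ^ r) :
    Nonempty (G ≃* Multiplicative (Fin r → ZMod p)) := by
  let : CommGroup G := { ‹Group G› with mul_comm := hcomm }
  -- a `have`: as a `let`, `zmodModule` unfolds to a `match` on `p` that blocks instance search
  have : Module (ZMod p) (Additive G) := AddCommGroup.zmodModule fun x => hpow x.toMul
  have : Finite G :=
    Nat.finite_of_card_ne_zero (hcard ▸ pow_ne_zero r (Fact.out : p.Prime).ne_zero)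
  have : Module.Finite (ZMod p) (Additive G) := Module.Finite.of_finite
  have hfr : finrank (ZMod p) (Additive G) = finrank (ZMod p) (Fin r → ZMod p) := by
    have hc := Module.natCard_eq_pow_finrank (K := ZMod p) (V := Additive G)
    rw [Nat.card_zmod] at hc
    rw [finrank_fin_fun]
    exact Nat.pow_right_injective (Fact.out : p.Prime).two_le (hc.symm.trans hcard)
  obtain ⟨e⟩ := FiniteDimensional.nonempty_linearEquiv_of_finrank_eq hfr
  exact ⟨AddEquiv.toMultiplicativeRight e.toAddEquiv⟩

lemma pow_char_eq_one {M : Type*} (K : Type*) [Semiring K] (p : ℕ) [CharP K p] [AddCommMonoid M]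
    [Module K M] (x : Multiplicative M) : x ^ p = 1 := by
  rw [← ofAdd_toAdd x, ← ofAdd_nsmul, ← Nat.cast_smul_eq_nsmul K, CharP.cast_eq_zero, zero_smul,
    ofAdd_zero]

theorem nonempty_mulEquiv_of_injective_multiplicative {G M K : Type*} [Group G] [Semiring K]
    [AddCommMonoid M] [Module K M] {p r : ℕ} [Fact p.Prime] [CharP K p]
    {φ : G →* Multiplicative M} (hφ : Function.Injective φ) (hcard : Nat.card G = p ^ r) :
    Nonempty (G ≃* Multiplicative (Fin r → ZMod p)) :=
  nonempty_mulEquiv_multiplicative_zmod_pi (fun a b => hφ (by rw [map_mul, map_mul, mul_comm]))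
    (fun g => hφ (by rw [map_pow, map_one, pow_char_eq_one K])) hcard

namespace Module.End

variable {K V : Type*} [Field K] [AddCommGroup V] [Module K V]

lemma ker_ne_bot_of_isNilpotent [Nontrivial V] {T : End K V} (hT : IsNilpotent T) :
    ker T ≠ ⊥ := by
  obtain ⟨n, hn⟩ := hT
  intro h
  have hinj : Function.Injective (T ^ n) := by
    rw [coe_pow]
    exact (ker_eq_bot.mp h).iterate n
  obtain ⟨x, hx⟩ := exists_ne (0 : V)
  exact hx (hinj (by simp [hn]))

lemma ker_lt_ker_sq {N : End K V} (hN : IsNilpotent N) (h0 : N ≠ 0) : ker N < ker (N ^ 2) := by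
  refine lt_of_le_of_ne (by rw [sq, mul_eq_comp]; exact ker_le_ker_comp N N)
    fun h => h0 ?_
  obtain ⟨n, hn⟩ := hN
  have := ker_pow_constant (f := N) (k := 1) (by simpa using h) n
  rw [pow_one, pow_add, hn, mul_zero, ker_zero] at this
  exact ker_eq_top.mp this

lemma apply_eq_zero_of_mem_of_finrank_eq_one {T : End K V} (hT : IsNilpotent T)
    {L : Submodule K V} (hL : finrank K L = 1) (hTL : Set.MapsTo T L L) {x : V} (hx : x ∈ L) :
    T x = 0 := by
  have : Nontrivial L := nontrivial_of_finrank_eq_succ hL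
  obtain ⟨c, hc, -⟩ := existsUnique_eq_smul_id_of_finrank_eq_one hL (T.restrict hTL)
  have hc0 : c = 0 := by
    have := isNilpotent.restrict hTL hT
    rw [hc, ← Module.End.one_eq_id, ← Algebra.algebraMap_eq_smul_one,
      IsNilpotent.map_iff (algebraMap K (End K L)).injective] at this
    exact this.eq_zero
  have hTx := LinearMap.congr_fun hc ⟨x, hx⟩
  rw [hc0, zero_smul] at hTx
  exact congr_arg Subtype.val hTx

section Commuting

variable {T N : End K V} (hT : IsNilpotent T) (hTN : Commute T N) (hN : finrank K (ker N) = 1)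
include hT hTN hN

lemma apply_eq_zero_of_mem_ker {x : V} (hx : x ∈ ker N) : T x = 0 :=
  apply_eq_zero_of_mem_of_finrank_eq_one hT hN
    (fun y (hy : N y = 0) => show N (T y) = 0 by
      rw [← mul_apply, ← hTN.eq, mul_apply, hy, map_zero]) hx

lemma apply_mem_ker_of_mem_ker_sq {x : V} (hx : x ∈ ker (N ^ 2)) : T x ∈ ker N := by
  rw [mem_ker, ← mul_apply, ← hTN.eq, mul_apply]
  exact apply_eq_zero_of_mem_ker hT hTN hN (by rwa [mem_ker, ← mul_apply, ← sq])

end Commuting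

variable {G : Type*} [Group G]

def subOneRestrictKerSq (ρ : G →* End K V) (N : End K V) (hnil : ∀ g, IsNilpotent (ρ g - 1))
    (hcomm : ∀ g, Commute (ρ g) N) (hN : finrank K (ker N) = 1) :
    G →* Multiplicative (ker (N ^ 2) →ₗ[K] V) where
  toFun g := .ofAdd ((ρ g - 1).domRestrict _)
  map_one' := by ext; simp
  map_mul' g h := by
    have hcomm' (g) : Commute (ρ g - 1) N := (hcomm g).sub_left (Commute.one_left N)
    ext ⟨x, hx⟩
    have hgh : ρ (g * h) - 1 = (ρ g - 1) * (ρ h - 1) + (ρ g - 1) + (ρ h - 1) := by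
      rw [map_mul]; noncomm_ring
    have hx' : (ρ g - 1) ((ρ h - 1) x) = 0 :=
      apply_eq_zero_of_mem_ker (hnil g) (hcomm' g) hN
        (apply_mem_ker_of_mem_ker_sq (hnil h) (hcomm' h) hN hx)
    show (ρ (g * h) - 1) x = (ρ g - 1) x + (ρ h - 1) x
    rw [hgh, LinearMap.add_apply, LinearMap.add_apply, mul_apply, hx', zero_add]

lemma ker_sq_le_ker_of_subOneRestrictKerSq_eq_one {ρ : G →* End K V} {N : End K V}
    {hnil hcomm hN} {g : G} (hg : subOneRestrictKerSq ρ N hnil hcomm hN g = 1) :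
    ker (N ^ 2) ≤ ker (ρ g - 1) :=
  fun x hx => LinearMap.congr_fun (congr_arg Multiplicative.toAdd hg) ⟨x, hx⟩

section FinrankThree

variable [FiniteDimensional K V] (hV : finrank K V = 3) {T : End K V}
  (h2 : finrank K (ker T) ≠ 2)
include hV h2

lemma eq_zero_of_two_le_finrank_ker (h : 2 ≤ finrank K (ker T)) : T = 0 := by
  have h3 : finrank K (ker T) = finrank K V := by
    have := Submodule.finrank_le (ker T)
    omega
  exact ker_eq_top.mp (Submodule.eq_top_of_finrank_eq h3)

lemma finrank_ker_eq_one_of_isNilpotent (hT : IsNilpotent T) (hT0 : T ≠ 0) :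
    finrank K (ker T) = 1 := by
  have : Nontrivial V := nontrivial_of_finrank_eq_succ hV
  have h0 : finrank K (ker T) ≠ 0 :=
    mt Submodule.finrank_eq_zero.mp (ker_ne_bot_of_isNilpotent hT)
  have := mt (eq_zero_of_two_le_finrank_ker hV h2) hT0
  omega

end FinrankThree

end Module.End

namespace Matrix.SpecialLinearGroup

variable {n K : Type*} [Fintype n] [DecidableEq n] [Field K]

def toEnd : SpecialLinearGroup n K →* Module.End K (n → K) :=
  LinearEquiv.automorphismGroup.toLinearMapMonoidHom.comp toLin'

lemma toEnd_injective : Function.Injective (toEnd : SpecialLinearGroup n K →* _) :=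
  LinearEquiv.toLinearMap_injective.comp toLin'_injective

lemma isNilpotent_toEnd_sub_one [Nonempty n] {p r : ℕ} [Fact p.Prime] [CharP K p]
    {g : SpecialLinearGroup n K} (h : g ^ p ^ r = 1) : IsNilpotent (toEnd g - 1) := by
  have : toEnd g - 1 = Matrix.toLin' ((g : Matrix n n K) - 1) := by
    rw [map_sub, Matrix.toLin'_one]
    rfl
  rw [this, Matrix.isNilpotent_toLin'_iff]
  exact isNilpotent_sub_one_of_pow_char_pow_eq_one (by rw [← coe_pow, h, coe_one])

open Module.End in
theorem exists_injective_monoidHom_multiplicative {p r : ℕ} [Fact p.Prime] [CharP K p]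
    (G : Subgroup (SpecialLinearGroup (Fin 3) K)) (hr : 1 ≤ r) (hcard : Nat.card G = p ^ r)
    (hsmall : ∀ g ∈ G, finrank K
      (ker (Matrix.mulVecLin (↑g : Matrix (Fin 3) (Fin 3) K) - LinearMap.id)) ≠ 2) :
    ∃ (W : Submodule K (Fin 3 → K)) (φ : G →* Multiplicative (W →ₗ[K] Fin 3 → K)),
      Function.Injective φ := by
  have hV : finrank K (Fin 3 → K) = 3 := by simp
  let ρ := toEnd.comp G.subtype
  have hρ : Function.Injective ρ := toEnd_injective.comp Subtype.val_injective
  have hnil (g : G) : IsNilpotent (ρ g - 1) := isNilpotent_toEnd_sub_one (r := r) <| by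
    rw [← map_pow, ← hcard, pow_card_eq_one', map_one]
  have hsmall' (g : G) : finrank K (ker (ρ g - 1)) ≠ 2 := hsmall g g.2
  have : Finite G := Nat.finite_of_card_ne_zero (by simp [hcard, (Fact.out : p.Prime).ne_zero])
  have : Nontrivial G := by
    rw [← Finite.one_lt_card_iff_nontrivial, hcard]
    exact Nat.one_lt_pow (by omega) (Fact.out : p.Prime).one_lt
  have := (IsPGroup.of_card hcard).center_nontrivial
  obtain ⟨z, hz⟩ := exists_ne (1 : Subgroup.center G)
  set N := ρ z - 1
  have hN0 : N ≠ 0 := sub_ne_zero.mpr fun h => hz (Subtype.ext (hρ (h.trans (map_one ρ).symm)))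
  have hN : finrank K (ker N) = 1 :=
    finrank_ker_eq_one_of_isNilpotent hV (hsmall' z) (hnil z) hN0
  have hcomm (g : G) : Commute (ρ g) N :=
    ((show Commute g z from Subgroup.mem_center_iff.mp z.2 g).map ρ).sub_right
      (Commute.one_right _)
  refine ⟨ker (N ^ 2), subOneRestrictKerSq ρ N hnil hcomm hN,
    (injective_iff_map_eq_one _).mpr fun g hg => hρ ?_⟩
  have hW : 2 ≤ finrank K (ker (N ^ 2)) := by
    have := Submodule.finrank_lt_finrank_of_lt (ker_lt_ker_sq (N := N) (hnil z) hN0)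
    omega
  have := eq_zero_of_two_le_finrank_ker hV (hsmall' g)
    (hW.trans (Submodule.finrank_mono (ker_sq_le_ker_of_subOneRestrictKerSq_eq_one hg)))
  rw [map_one]
  exact sub_eq_zero.mp this

end Matrix.SpecialLinearGroup

theorem stmt_8_general (K : Type*) [Field K] [CharP K 3]
    (G : Subgroup (Matrix.SpecialLinearGroup (Fin 3) K)) (r : ℕ) (hr : 1 ≤ r)
    (hcard : Nat.card G = 3 ^ r)
    (hsmall : ∀ g ∈ G,
      Module.finrank K
        (LinearMap.ker
          (Matrix.mulVecLin (↑g : Matrix (Fin 3) (Fin 3) K) - LinearMap.id)) ≠ 2) :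
    Nonempty (G ≃* Multiplicative (Fin r → ZMod 3)) := by
  have : Fact (Nat.Prime 3) := ⟨Nat.prime_three⟩
  obtain ⟨_, φ, hφ⟩ :=
    Matrix.SpecialLinearGroup.exists_injective_monoidHom_multiplicative G hr hcard hsmall
  exact nonempty_mulEquiv_of_injective_multiplicative (K := K) hφ hcard

/-- K algebraically closed of characteristic 3, G ≤ SL(3,K) finite of order 3^r
(r ≥ 1) with no pseudo-reflections (no element has 2-dimensional fixed space in K³).
Then G ≅ (ℤ/3ℤ)^r. -/
theorem stmt_8 (K : Type*) [Field K] [IsAlgClosed K] [CharP K 3]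
    (G : Subgroup (Matrix.SpecialLinearGroup (Fin 3) K)) (r : ℕ) (hr : 1 ≤ r)
    (hcard : Nat.card G = 3 ^ r)
    (hsmall : ∀ g ∈ G,
      Module.finrank K
        (LinearMap.ker
          (Matrix.mulVecLin (↑g : Matrix (Fin 3) (Fin 3) K) - LinearMap.id)) ≠ 2) :
    Nonempty (G ≃* Multiplicative (Fin r → ZMod 3)) :=
  stmt_8_general K G r hr hcard hsmall
end

section
/- Let K be an algebraically closed field of characteristic 3 and G a finite subgroup of SL(3,K) with no pseudo-reflections whose order is a power of 3. Then every nonidentity element of G has order 3, and G is abelian. -/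
/-!
If `g` lies in a `3`-group then `(g - 1) ^ 3 ^ r = g ^ 3 ^ r - 1 = 0` in characteristic `3`, so
`g - 1` is a nilpotent `3 × 3` matrix, whence `(g - 1) ^ 3 = 0`, i.e. `g ^ 3 = 1`.

For commutativity pick `z ≠ 1` in the centre of `G` and put `N = z - 1`, so `N ^ 3 = 0`.
If `N ^ 2 = 0` then `range N ≤ ker N` forces `dim ker N ≥ 2`, which is excluded because `z` is
neither a pseudo-reflection nor `1`. So some `v` has `N (N v) ≠ 0`, and `v, N v, N (N v)` is a
basis: `v` is a cyclic vector of `N`. Every element of `G` commutes with `N`, hence is a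
polynomial in `N`, and polynomials in `N` commute with each other.
-/

open Module LinearMap Polynomial

namespace Matrix

variable {n R : Type*} [Fintype n] [DecidableEq n] [CommRing R] [IsDomain R]

theorem pow_card_eq_zero_of_isNilpotent {A : Matrix n n R} (hA : IsNilpotent A) :
    A ^ Fintype.card n = 0 := by
  have hchar := sub_eq_zero.mp (isNilpotent_charpoly_sub_pow_of_isNilpotent hA).eq_zero
  simpa [hchar] using A.aeval_self_charpoly

theorem pow_char_eq_one_of_pow_char_pow_eq_one [Nonempty n] {p : ℕ} [Fact p.Prime] [CharP R p]
    (hn : Fintype.card n ≤ p) {A : Matrix n n R} {r : ℕ} (hA : A ^ p ^ r = 1) : A ^ p = 1 := by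
  have hnil : IsNilpotent (A - 1) :=
    ⟨p ^ r, by
      rw [sub_pow_char_pow_of_commute _ _ (Commute.one_right A), hA, one_pow, sub_self]⟩
  have hp : (A - 1) ^ p = 0 := pow_eq_zero_of_le hn (pow_card_eq_zero_of_isNilpotent hnil)
  rwa [sub_pow_char_of_commute _ (Commute.one_right A), one_pow, sub_eq_zero] at hp

theorem SpecialLinearGroup.pow_char_eq_one_of_isPGroup [Nonempty n] {p : ℕ} [Fact p.Prime]
    [CharP R p] (hn : Fintype.card n ≤ p) {G : Subgroup (SpecialLinearGroup n R)}
    (hG : IsPGroup p G) {g : SpecialLinearGroup n R} (hg : g ∈ G) : g ^ p = 1 := by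
  obtain ⟨r, hr⟩ := hG ⟨g, hg⟩
  have hr' : (g : Matrix n n R) ^ p ^ r = 1 := by
    simpa using congrArg (fun x : G => ((x : SpecialLinearGroup n R) : Matrix n n R)) hr
  exact SpecialLinearGroup.coeMonoidHom_injective (by
    simpa using pow_char_eq_one_of_pow_char_pow_eq_one hn hr')

end Matrix

theorem IsPGroup.commute_of_forall_centralizer_commute {G : Type*} [Group G] [Finite G] {p : ℕ}
    [Fact p.Prime] (hG : IsPGroup p G)
    (h : ∀ z : G, z ≠ 1 → ∀ x y, Commute z x → Commute z y → Commute x y) (x y : G) :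
    Commute x y := by
  rcases subsingleton_or_nontrivial G with hG1 | hG1
  · rw [Subsingleton.elim x y]
  have := hG.center_nontrivial
  obtain ⟨z, hz⟩ := exists_ne (1 : Subgroup.center G)
  exact h z (fun h1 => hz (Subtype.ext h1)) x y
    (Subgroup.mem_center_iff.mp z.2 x).symm (Subgroup.mem_center_iff.mp z.2 y).symm

namespace Module.End

section Cyclic

variable {R M : Type*} [CommSemiring R] [AddCommMonoid M] [Module R M] {f φ ψ : End R M} {v : M}

theorem commute_aeval_of_commute (hφ : Commute f φ) (q : R[X]) : Commute φ (aeval f q) := by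
  rw [aeval_eq_sum_range]
  exact Commute.sum_right _ _ _ fun i _ => (hφ.symm.pow_right i).smul_right _

theorem exists_eq_aeval_of_commute (hv : Function.Surjective fun p : R[X] => aeval f p v)
    (hφ : Commute f φ) : ∃ p : R[X], φ = aeval f p := by
  obtain ⟨p, hp⟩ := hv (φ v)
  refine ⟨p, LinearMap.ext fun w => ?_⟩
  obtain ⟨q, rfl⟩ := hv w
  calc φ (aeval f q v) = aeval f q (φ v) := congrArg (· v) (commute_aeval_of_commute hφ q).eq
    _ = aeval f p (aeval f q v) := by
        rw [← hp, ← mul_apply, ← mul_apply, ← map_mul, ← map_mul, mul_comm]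

theorem commute_of_commute_of_cyclic (hv : Function.Surjective fun p : R[X] => aeval f p v)
    (hφ : Commute f φ) (hψ : Commute f ψ) : Commute φ ψ := by
  obtain ⟨p, rfl⟩ := exists_eq_aeval_of_commute hv hφ
  obtain ⟨q, rfl⟩ := exists_eq_aeval_of_commute hv hψ
  exact (Commute.all p q).map (aeval f)

end Cyclic

section CubeZero

variable {K V : Type*} [Field K] [AddCommGroup V] [Module K V] {f : End K V}

theorem finrank_le_two_mul_finrank_ker_of_sq_eq_zero [FiniteDimensional K V] (hf : f ^ 2 = 0) :
    finrank K V ≤ 2 * finrank K (ker f) := by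
  have hle : range f ≤ ker f := by
    rintro _ ⟨w, rfl⟩
    rw [mem_ker, ← mul_apply, ← sq, hf, LinearMap.zero_apply]
  have := Submodule.finrank_mono hle
  have := f.finrank_range_add_finrank_ker
  omega

theorem linearIndependent_of_pow_three_eq_zero (hf : f ^ 3 = 0) {v : V} (hv : f (f v) ≠ 0) :
    LinearIndependent K ![v, f v, f (f v)] := by
  have hf3 (w : V) : f (f (f w)) = 0 := by simp [← mul_apply, ← pow_three, hf]
  rw [Fintype.linearIndependent_iff]
  intro c hc
  simp only [Fin.sum_univ_three, Matrix.cons_val] at hc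
  have h0 : c 0 = 0 := by
    have := congrArg (fun w => f (f w)) hc
    simp only [map_add, map_smul, hf3, smul_zero, add_zero, map_zero] at this
    exact (smul_eq_zero.mp this).resolve_right hv
  have h1 : c 1 = 0 := by
    have := congrArg f hc
    simp only [map_add, map_smul, hf3, h0, zero_smul, zero_add, smul_zero, add_zero,
      map_zero] at this
    exact (smul_eq_zero.mp this).resolve_right hv
  have h2 : c 2 = 0 := by
    simp only [h0, h1, zero_smul, zero_add] at hc
    exact (smul_eq_zero.mp hc).resolve_right hv
  intro i
  fin_cases i <;> assumption

theorem surjective_aeval_apply_of_pow_three_eq_zero (hV : finrank K V = 3) (hf : f ^ 3 = 0)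
    {v : V} (hv : f (f v) ≠ 0) : Function.Surjective fun p : K[X] => aeval f p v := by
  intro w
  have hspan := (linearIndependent_of_pow_three_eq_zero hf hv).span_eq_top_of_card_eq_finrank
    (by simp [hV])
  obtain ⟨c, hc⟩ := (Submodule.mem_span_range_iff_exists_fun K).mp (hspan ▸ Submodule.mem_top)
  refine ⟨C (c 0) + C (c 1) * X + C (c 2) * X ^ 2, ?_⟩
  simpa [Fin.sum_univ_three, Algebra.smul_def, sq] using hc

theorem exists_surjective_aeval_apply_of_finrank_ker_ne_two (hV : finrank K V = 3)
    (hf3 : f ^ 3 = 0) (hf : f ≠ 0) (hker : finrank K (ker f) ≠ 2) :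
    ∃ v, Function.Surjective fun p : K[X] => aeval f p v := by
  have : FiniteDimensional K V := .of_finrank_eq_succ hV
  obtain ⟨v, hv⟩ : ∃ v, f (f v) ≠ 0 := by
    by_contra! hsq
    have hle := finrank_le_two_mul_finrank_ker_of_sq_eq_zero (f := f) (LinearMap.ext fun w => by
      simpa [sq] using hsq w)
    have : finrank K (ker f) ≤ 3 := hV ▸ Submodule.finrank_le _
    have htop : ker f = ⊤ := Submodule.eq_top_of_finrank_eq (by omega)
    exact hf (ker_eq_top.mp htop)
  exact ⟨v, surjective_aeval_apply_of_pow_three_eq_zero hV hf3 hv⟩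

end CubeZero

end Module.End

theorem Matrix.commute_of_commute_of_pow_three_eq_one {K : Type*} [Field K] [CharP K 3]
    {A B C : Matrix (Fin 3) (Fin 3) K} (hA3 : A ^ 3 = 1) (hA : A ≠ 1)
    (hker : finrank K (ker (A.mulVecLin - LinearMap.id)) ≠ 2)
    (hB : Commute A B) (hC : Commute A C) : Commute B C := by
  have : Fact (Nat.Prime 3) := ⟨Nat.prime_three⟩
  let e : Matrix (Fin 3) (Fin 3) K ≃ₐ[K] End K (Fin 3 → K) := Matrix.toLinAlgEquiv'
  have hunip : (A - 1) ^ 3 = 0 := by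
    rw [sub_pow_char_of_commute _ (Commute.one_right A), hA3, one_pow, sub_self]
  obtain ⟨v, hv⟩ := Module.End.exists_surjective_aeval_apply_of_finrank_ker_ne_two
    (f := e (A - 1)) (by simp) (by rw [← map_pow, hunip, map_zero])
    (by simpa [sub_eq_zero] using hA) (by rw [map_sub, map_one, Module.End.one_eq_id]; exact hker)
  refine Commute.of_map e.injective (Module.End.commute_of_commute_of_cyclic hv ?_ ?_)
  · exact (hB.sub_left (Commute.one_left B)).map e
  · exact (hC.sub_left (Commute.one_left C)).map e

theorem stmt_9_general (K : Type*) [Field K] [CharP K 3]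
    (G : Subgroup (Matrix.SpecialLinearGroup (Fin 3) K))
    (hcard : ∃ r : ℕ, Nat.card G = 3 ^ r)
    (hsmall : ∀ g ∈ G,
      Module.finrank K
        (LinearMap.ker
          (Matrix.mulVecLin (↑g : Matrix (Fin 3) (Fin 3) K) - LinearMap.id)) ≠ 2) :
    (∀ g ∈ G, g ≠ 1 → orderOf g = 3) ∧ ∀ g ∈ G, ∀ h ∈ G, g * h = h * g := by
  obtain ⟨r, hr⟩ := hcard
  have : Fact (Nat.Prime 3) := ⟨Nat.prime_three⟩
  have : Finite G := Nat.finite_of_card_ne_zero (by rw [hr]; positivity)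
  have hG : IsPGroup 3 G := IsPGroup.of_card hr
  have hcube {g} (hg : g ∈ G) : g ^ 3 = 1 :=
    Matrix.SpecialLinearGroup.pow_char_eq_one_of_isPGroup (by simp) hG hg
  refine ⟨fun g hg hne => orderOf_eq_prime (hcube hg) hne, fun g hg h hh => ?_⟩
  let ι : G →* Matrix (Fin 3) (Fin 3) K :=
    Matrix.SpecialLinearGroup.coeMonoidHom.comp G.subtype
  have hι : Function.Injective ι :=
    Matrix.SpecialLinearGroup.coeMonoidHom_injective.comp Subtype.val_injective
  refine congrArg Subtype.val (hG.commute_of_forall_centralizer_commute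
    (fun z hz x y hzx hzy => ?_) ⟨g, hg⟩ ⟨h, hh⟩)
  refine Commute.of_map hι (Matrix.commute_of_commute_of_pow_three_eq_one ?_ ?_ (hsmall z z.2)
    (hzx.map ι) (hzy.map ι))
  · show ι z ^ 3 = 1
    rw [← map_pow, show z ^ 3 = 1 from Subtype.ext (hcube z.2), map_one]
  · exact hι.ne hz |>.trans_eq (map_one ι)

/-- K algebraically closed of characteristic 3, G ≤ SL(3,K) with no
pseudo-reflections, of order a power of 3. Then every nonidentity element of G has
order 3, and G is abelian. -/
theorem stmt_9 (K : Type*) [Field K] [IsAlgClosed K] [CharP K 3]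
    (G : Subgroup (Matrix.SpecialLinearGroup (Fin 3) K))
    (hcard : ∃ r : ℕ, Nat.card G = 3 ^ r)
    (hsmall : ∀ g ∈ G,
      Module.finrank K
        (LinearMap.ker
          (Matrix.mulVecLin (↑g : Matrix (Fin 3) (Fin 3) K) - LinearMap.id)) ≠ 2) :
    (∀ g ∈ G, g ≠ 1 → orderOf g = 3) ∧ ∀ g ∈ G, ∀ h ∈ G, g * h = h * g :=
  stmt_9_general K G hcard hsmall
end

section
/- Let K be a field of characteristic 3, a ∈ K \ F₃ and b ∈ K. Then the image σ(U(a,b)) ⊆ SL(3,K) contains no pseudo-reflection, where σ(c₁,c₂) = [[1,-c₁,c₁²+c₂],[0,1,c₁],[0,0,1]] and U(a,b) = ⟨(1,0),(a,b)⟩ ≤ (K²,+). -/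
/-!
An element of `U(a,b)` is `m • (1,0) + n • (a,b)` with `m, n` integers, which act through
`𝔽₃ = {0, 1, -1}`. Since `a ∉ 𝔽₃`, its first coordinate `m + n a` vanishes only when `n = 0`
in `K`, and then `c = 0` and `σ(c) = 1` fixes all of `K³`. If `c₁ ≠ 0`, the fixed vectors of
`σ(c)` are those with `v₁ = v₂ = 0`, a line. In neither case is the fixed space a plane.
-/

open Module

section CharThree

variable {R : Type*} [Ring R] [CharP R 3]

theorem intCast_eq_zero_or_one_or_neg_one_of_charThree (m : ℤ) :
    (m : R) = 0 ∨ (m : R) = 1 ∨ (m : R) = -1 := by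
  rw [← map_intCast (ZMod.castHom (dvd_refl 3) R)]
  obtain h | h | h : (m : ZMod 3) = 0 ∨ (m : ZMod 3) = 1 ∨ (m : ZMod 3) = -1 := by
    generalize (m : ZMod 3) = z; decide +revert
  all_goals simp [h]

end CharThree

section

variable {K : Type*} [Field K]

theorem intCast_eq_zero_of_intCast_add_intCast_mul_eq_zero [CharP K 3] {a : K}
    (ha : a ≠ 0 ∧ a ≠ 1 ∧ a ≠ -1) {m n : ℤ} (h : (m : K) + n * a = 0) : (n : K) = 0 := by
  by_contra hn
  have hn_sq : (n : K) * n = 1 := by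
    rcases intCast_eq_zero_or_one_or_neg_one_of_charThree (R := K) n with h | h | h
    exacts [absurd h hn, by simp [h], by simp [h]]
  have ha_int : a = ((-(m * n) : ℤ) : K) := by
    push_cast
    linear_combination n * h - a * hn_sq
  rcases intCast_eq_zero_or_one_or_neg_one_of_charThree (R := K) (-(m * n)) with h | h | h <;>
    rw [h] at ha_int
  exacts [ha.1 ha_int, ha.2.1 ha_int, ha.2.2 ha_int]

theorem eq_zero_of_mem_closure_of_fst_eq_zero [CharP K 3] {a b : K}
    (ha : a ≠ 0 ∧ a ≠ 1 ∧ a ≠ -1) {c : K × K}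
    (hc : c ∈ AddSubgroup.closure {((1 : K), (0 : K)), (a, b)}) (hc₁ : c.1 = 0) : c = 0 := by
  obtain ⟨m, n, rfl⟩ := AddSubgroup.mem_closure_pair.mp hc
  rw [Prod.fst_add, Prod.smul_fst, Prod.smul_fst, zsmul_eq_mul, zsmul_eq_mul, mul_one] at hc₁
  have hn := intCast_eq_zero_of_intCast_add_intCast_mul_eq_zero ha hc₁
  rw [hn, zero_mul, add_zero] at hc₁
  ext <;> simp [hn, hc₁]

def sigmaMatrix (c : K × K) : Matrix (Fin 3) (Fin 3) K :=
  !![1, -c.1, c.1 ^ 2 + c.2; 0, 1, c.1; 0, 0, 1]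

theorem sigmaMatrix_zero : sigmaMatrix (0 : K × K) = 1 := by
  ext i j
  fin_cases i <;> fin_cases j <;> simp [sigmaMatrix]

theorem finrank_ker_sigmaMatrix_zero_sub_id :
    finrank K (LinearMap.ker ((sigmaMatrix (0 : K × K)).mulVecLin - LinearMap.id)) = 3 := by
  rw [sigmaMatrix_zero, Matrix.mulVecLin_one, sub_self, LinearMap.ker_zero, finrank_top,
    finrank_fin_fun]

theorem ker_sigmaMatrix_sub_id_of_fst_ne_zero {c : K × K} (hc₁ : c.1 ≠ 0) :
    LinearMap.ker ((sigmaMatrix c).mulVecLin - LinearMap.id) = K ∙ Pi.single 0 1 := by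
  ext v
  simp only [LinearMap.mem_ker, LinearMap.sub_apply, Matrix.mulVecLin_apply,
    LinearMap.id_apply, sub_eq_zero, Submodule.mem_span_singleton]
  constructor
  · intro h
    have h₀ : -(c.1 * v 1) + (c.1 ^ 2 + c.2) * v 2 = 0 := by
      simpa [sigmaMatrix, Matrix.mulVec, dotProduct, Fin.sum_univ_three, add_assoc] using
        congrFun h 0
    have h₁ : c.1 * v 2 = 0 := by
      simpa [sigmaMatrix, Matrix.mulVec, dotProduct, Fin.sum_univ_three] using congrFun h 1
    have hv₂ : v 2 = 0 := (mul_eq_zero.mp h₁).resolve_left hc₁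
    have hv₁ : v 1 = 0 := by
      refine (mul_eq_zero.mp ?_).resolve_left hc₁
      linear_combination -h₀ + (c.1 ^ 2 + c.2) * hv₂
    refine ⟨v 0, ?_⟩
    ext i
    fin_cases i <;> simp [hv₁, hv₂]
  · rintro ⟨t, rfl⟩
    ext i
    fin_cases i <;> simp [sigmaMatrix, Matrix.mulVec, dotProduct, Fin.sum_univ_three]

theorem finrank_ker_sigmaMatrix_sub_id_of_fst_ne_zero {c : K × K} (hc₁ : c.1 ≠ 0) :
    finrank K (LinearMap.ker ((sigmaMatrix c).mulVecLin - LinearMap.id)) = 1 := by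
  rw [ker_sigmaMatrix_sub_id_of_fst_ne_zero hc₁, finrank_span_singleton]
  simp

end

/-- K of characteristic 3, a ∉ F₃ = {0,1,-1}, b ∈ K. The image
σ(U(a,b)) ⊆ SL(3,K) contains no pseudo-reflection, where
σ(c₁,c₂) = [[1,-c₁,c₁²+c₂],[0,1,c₁],[0,0,1]] and U(a,b) = ⟨(1,0),(a,b)⟩ ≤ (K²,+). -/
theorem stmt_14 (K : Type*) [Field K] [CharP K 3]
    (a b : K) (ha : a ≠ 0 ∧ a ≠ 1 ∧ a ≠ -1) :
    ∀ c ∈ AddSubgroup.closure {((1 : K), (0 : K)), (a, b)},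
      Module.finrank K
        (LinearMap.ker
          (Matrix.mulVecLin
            (!![1, -c.1, c.1 ^ 2 + c.2; 0, 1, c.1; 0, 0, 1] : Matrix (Fin 3) (Fin 3) K)
            - LinearMap.id)) ≠ 2 := by
  intro c hc
  suffices finrank K (LinearMap.ker ((sigmaMatrix c).mulVecLin - LinearMap.id)) ≠ 2 from this
  by_cases hc₁ : c.1 = 0
  · obtain rfl := eq_zero_of_mem_closure_of_fst_eq_zero ha hc hc₁
    rw [finrank_ker_sigmaMatrix_zero_sub_id]
    decide
  · rw [finrank_ker_sigmaMatrix_sub_id_of_fst_ne_zero hc₁]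
    decide
end

section
/- Let K be an algebraically closed field of characteristic 3. The singular locus of the hypersurface X = V(x₂⁹ - x₃² + x₁⁹x₄ + x₁⁶H(x₁,x₂)) ⊆ A⁴, where H(s₁,s₂) = (1+α²)s₂⁶ - α²s₁²s₂⁵ + (1+α²)²s₁⁶s₂² + α²(1+α²)s₁⁸s₂² + α⁴s₁¹⁰s₂ and α ∈ K with α ≠ 0, is contained in V(x₁, x₂, x₃). -/
open MvPolynomial

/-
Only the two simplest partial derivatives are needed. As `H` does not involve `x₄`,
`∂f/∂x₄ = x₁⁹`, so a singular point has `x₁ = 0`; then `∂f/∂x₃ = -2x₃` forces `x₃ = 0`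
(the characteristic is not `2`), and `f = x₂⁹` finally gives `x₂ = 0`.
-/

section SingularLocus

variable {K : Type*} [Field K]

noncomputable def hypersurfacePoly (H : MvPolynomial (Fin 4) K) : MvPolynomial (Fin 4) K :=
  X 1 ^ 9 - X 2 ^ 2 + X 0 ^ 9 * X 3 + X 0 ^ 6 * H

theorem eval_pderiv_three_hypersurfacePoly {H : MvPolynomial (Fin 4) K} (hH : pderiv 3 H = 0)
    (x : Fin 4 → K) : eval x (pderiv 3 (hypersurfacePoly H)) = x 0 ^ 9 := by
  simp [hypersurfacePoly, pderiv_X, hH]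

theorem eval_pderiv_two_hypersurfacePoly_of_eq_zero (H : MvPolynomial (Fin 4) K)
    {x : Fin 4 → K} (hx : x 0 = 0) : eval x (pderiv 2 (hypersurfacePoly H)) = -2 * x 2 := by
  simp [hypersurfacePoly, pderiv_X, hx]

theorem eval_hypersurfacePoly_of_eq_zero (H : MvPolynomial (Fin 4) K) {x : Fin 4 → K}
    (hx : x 0 = 0) : eval x (hypersurfacePoly H) = x 1 ^ 9 - x 2 ^ 2 := by
  simp [hypersurfacePoly, hx]

theorem eq_zero_of_singular_hypersurfacePoly (h2 : (2 : K) ≠ 0)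
    {H : MvPolynomial (Fin 4) K} (hH : pderiv 3 H = 0) {x : Fin 4 → K}
    (hf : eval x (hypersurfacePoly H) = 0) (hf' : ∀ i, eval x (pderiv i (hypersurfacePoly H)) = 0) :
    x 0 = 0 ∧ x 1 = 0 ∧ x 2 = 0 := by
  have hx0 : x 0 = 0 := by
    simpa [eval_pderiv_three_hypersurfacePoly hH] using hf' 3
  have hx2 : x 2 = 0 := by
    simpa [eval_pderiv_two_hypersurfacePoly_of_eq_zero H hx0, h2] using hf' 2
  have hx1 : x 1 = 0 := by
    simpa [eval_hypersurfacePoly_of_eq_zero H hx0, hx2] using hf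
  exact ⟨hx0, hx1, hx2⟩

end SingularLocus

theorem stmt_15_general (K : Type*) [Field K] [CharP K 3] (α : K)
    (H f : MvPolynomial (Fin 4) K)
    (hH : H = C (1 + α ^ 2) * X 1 ^ 6 - C (α ^ 2) * X 0 ^ 2 * X 1 ^ 5
        + C ((1 + α ^ 2) ^ 2) * X 0 ^ 6 * X 1 ^ 2
        + C (α ^ 2 * (1 + α ^ 2)) * X 0 ^ 8 * X 1 ^ 2
        + C (α ^ 4) * X 0 ^ 10 * X 1)
    (hf : f = X 1 ^ 9 - X 2 ^ 2 + X 0 ^ 9 * X 3 + X 0 ^ 6 * H) :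
    ∀ x : Fin 4 → K, eval x f = 0 → (∀ i : Fin 4, eval x (pderiv i f) = 0) →
      x 0 = 0 ∧ x 1 = 0 ∧ x 2 = 0 := by
  have h2 : (2 : K) ≠ 0 := Ring.two_ne_zero (by rw [ringChar.eq K 3]; decide)
  have hH3 : pderiv 3 H = 0 := by
    subst hH
    simp [pderiv_X]
  subst hf
  exact fun x => eq_zero_of_singular_hypersurfacePoly h2 hH3

/-- K algebraically closed of characteristic 3, α ≠ 0. The singular locus of
X = V(x₂⁹ - x₃² + x₁⁹x₄ + x₁⁶H(x₁,x₂)) ⊆ 𝔸⁴, with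
H(s₁,s₂) = (1+α²)s₂⁶ - α²s₁²s₂⁵ + (1+α²)²s₁⁶s₂² + α²(1+α²)s₁⁸s₂² + α⁴s₁¹⁰s₂,
is contained in V(x₁,x₂,x₃). Variables: X 0 = x₁, X 1 = x₂, X 2 = x₃, X 3 = x₄. -/
theorem stmt_15 (K : Type*) [Field K] [IsAlgClosed K] [CharP K 3] (α : K) (hα : α ≠ 0)
    (H f : MvPolynomial (Fin 4) K)
    (hH : H = C (1 + α ^ 2) * X 1 ^ 6 - C (α ^ 2) * X 0 ^ 2 * X 1 ^ 5
        + C ((1 + α ^ 2) ^ 2) * X 0 ^ 6 * X 1 ^ 2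
        + C (α ^ 2 * (1 + α ^ 2)) * X 0 ^ 8 * X 1 ^ 2
        + C (α ^ 4) * X 0 ^ 10 * X 1)
    (hf : f = X 1 ^ 9 - X 2 ^ 2 + X 0 ^ 9 * X 3 + X 0 ^ 6 * H) :
    ∀ x : Fin 4 → K, eval x f = 0 → (∀ i : Fin 4, eval x (pderiv i f) = 0) →
      x 0 = 0 ∧ x 1 = 0 ∧ x 2 = 0 :=
  stmt_15_general K α H f hH hf
end

section
/- Let K be a field of characteristic 3. In the polynomial ring K[x₂,x₄,t,v], the polynomial x₂⁷·g - v², where g ∈ K[x₂,x₄,t] has nonzero constant term (e.g., g = 1 + t⁹x₄ + x₂³h for some h), is irreducible; hence V(x₂⁷g - v²) is integral. -/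
/-!
As a polynomial in `v` over the UFD `R = K[x₂, x₄, t]`, `x₂⁷ g - v²` is, up to sign, the monic
`v² - c` with `c = x₂⁷ g`. Since `R` is integrally closed, Gauss's lemma reduces irreducibility to
`c` not being a square in `R`, and it is not one: `x₂` is prime and does not divide `g`, so it
divides `c` to the odd power `7`.
-/

theorem Prime.dvd_of_sq_eq_pow_odd_mul {R : Type*} [CommMonoidWithZero R] [IsCancelMulZero R]
    {p : R} (hp : Prime p) {g s : R} {k : ℕ} (h : s ^ 2 = p ^ (2 * k + 1) * g) : p ∣ g := by
  induction k generalizing s with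
  | zero =>
    obtain ⟨t, rfl⟩ := hp.dvd_of_dvd_pow (⟨g, by simpa using h⟩ : p ∣ s ^ 2)
    refine ⟨t ^ 2, mul_left_cancel₀ hp.ne_zero ?_⟩
    rw [← mul_assoc, ← sq, ← mul_pow, h]
    simp
  | succ k ih =>
    obtain ⟨t, rfl⟩ := hp.dvd_of_dvd_pow
      (⟨p ^ (2 * k + 2) * g, by rw [h, ← mul_assoc, ← pow_succ']; ring_nf⟩ : p ∣ s ^ 2)
    refine ih (s := t) (mul_left_cancel₀ (pow_ne_zero 2 hp.ne_zero) ?_)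
    rw [← mul_pow, h, ← mul_assoc, ← pow_add]
    ring_nf

namespace Polynomial

theorem irreducible_X_pow_sub_C_of_isIntegrallyClosed {R : Type*} [CommRing R] [IsDomain R]
    [IsIntegrallyClosed R] {n : ℕ} (hn : n.Prime) {c : R} (hc : ∀ s : R, s ^ n ≠ c) :
    Irreducible (X ^ n - C c) := by
  have hmonic : (X ^ n - C c).Monic := monic_X_pow_sub_C c hn.ne_zero
  rw [hmonic.irreducible_iff_irreducible_map_fraction_map (K := FractionRing R),
    Polynomial.map_sub, Polynomial.map_pow, map_X, map_C]
  refine X_pow_sub_C_irreducible_of_prime hn fun b hb => ?_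
  have hb_int : IsIntegral R b := ⟨_, hmonic, by simp [hb]⟩
  obtain ⟨s, rfl⟩ := IsIntegrallyClosed.isIntegral_iff.1 hb_int
  exact hc s (IsFractionRing.injective R (FractionRing R) (by rwa [map_pow]))

end Polynomial

open MvPolynomial

namespace MvPolynomial

theorem optionEquivLeft_rename_some {R σ : Type*} [CommSemiring R] (p : MvPolynomial σ R) :
    optionEquivLeft R σ (rename some p) = Polynomial.C p := by
  suffices (optionEquivLeft R σ).toAlgHom.comp (rename some) = Polynomial.CAlgHom from
    congr($this p)
  ext i
  simp [optionEquivLeft_X_some]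

theorem irreducible_rename_castSucc_sub_X_last_pow {R : Type*} [CommRing R] [IsDomain R]
    [UniqueFactorizationMonoid R] {n m : ℕ} (hm : m.Prime) {c : MvPolynomial (Fin n) R}
    (hc : ∀ s, s ^ m ≠ c) :
    Irreducible (rename Fin.castSucc c - X (Fin.last n) ^ m) := by
  let e := (renameEquiv R finSuccEquivLast).trans (optionEquivLeft R (Fin n))
  have he : e (rename Fin.castSucc c - X (Fin.last n) ^ m) =
      -(Polynomial.X ^ m - Polynomial.C c) := by
    have h_castSucc : ⇑(finSuccEquivLast (n := n)) ∘ Fin.castSucc = some :=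
      _root_.funext finSuccEquivLast_castSucc
    simp [e, rename_rename, h_castSucc, optionEquivLeft_rename_some, optionEquivLeft_X_none]
  rw [← MulEquiv.irreducible_iff e.toMulEquiv]
  change Irreducible (e _)
  rw [he]
  exact (Associated.refl _).neg_right.irreducible
    (Polynomial.irreducible_X_pow_sub_C_of_isIntegrallyClosed hm hc)

end MvPolynomial

/-- Variables: `X 0 = x₂`, `X 1 = x₄`, `X 2 = t`, `X 3 = v`. -/
theorem stmt_16_general (K : Type*) [Field K]
    (g : MvPolynomial (Fin 3) K) (hg : constantCoeff g ≠ 0) :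
    Irreducible
      ((X 0 : MvPolynomial (Fin 4) K) ^ 7 * rename (Fin.castSucc) g - X 3 ^ 2) := by
  have h_not_sq : ∀ s : MvPolynomial (Fin 3) K, s ^ 2 ≠ X 0 ^ (2 * 3 + 1) * g := fun s hs => by
    obtain ⟨q, rfl⟩ := X_prime.dvd_of_sq_eq_pow_odd_mul hs
    simp at hg
  simpa using irreducible_rename_castSucc_sub_X_last_pow Nat.prime_two h_not_sq

/-- K of characteristic 3. In K[x₂,x₄,t,v] (variables X 0 = x₂, X 1 = x₄,
X 2 = t, X 3 = v), the polynomial x₂⁷·g - v², where g ∈ K[x₂,x₄,t] has nonzero constant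
term (e.g. g = 1 + t⁹x₄ + x₂³h), is irreducible. -/
theorem stmt_16 (K : Type*) [Field K] [CharP K 3]
    (g : MvPolynomial (Fin 3) K) (hg : constantCoeff g ≠ 0) :
    Irreducible
      ((X 0 : MvPolynomial (Fin 4) K) ^ 7 * rename (Fin.castSucc) g - X 3 ^ 2) :=
  stmt_16_general K g hg
end
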